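/- Suppose s ≥ 3 and r ≥ s+1. Then |ζ_1| + |ζ_2| < ((r−1)(s−1))^{1/2}. -/

import Mathlib

/-!
The sum `S` and product `P` of the roots are real, and `P ≥ 0`. Either both roots are real, of
the same sign, and `‖ζ₁‖ + ‖ζ₂‖ = |S| ≥ 2√P`; or they are complex conjugates, and
`‖ζ₁‖ + ‖ζ₂‖ = 2√P ≥ |S|`. So the bound amounts to `S² < (r-1)(s-1)` and `4P < (r-1)(s-1)`,
two polynomial inequalities that become evident after substituting `s = u + 3`, `r = t + u + 4`
with `t, u ≥ 0`.
-/

open ComplexConjugate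

theorem Complex.eq_conj_of_add_of_mul_real {z w : ℂ} {S P : ℝ} (hS : z + w = S) (hP : z * w = P)
    (hz : z.im ≠ 0) : w = conj z := by
  have him := congrArg Complex.im hS
  have hpim := congrArg Complex.im hP
  simp only [Complex.add_im, Complex.mul_im, Complex.ofReal_im] at him hpim
  have hw_im : w.im = -z.im := by linarith
  have hw_re : w.re = z.re := by
    rw [hw_im] at hpim
    have : z.im * (w.re - z.re) = 0 := by linarith
    linarith [(mul_eq_zero.1 this).resolve_left hz]
  exact Complex.ext (by simp [hw_re]) (by simp [hw_im])

theorem Real.two_mul_sqrt_mul_le_abs_add {x y : ℝ} (h : 0 ≤ x * y) : 2 * √(x * y) ≤ |x + y| := by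
  rw [← Real.sqrt_sq_eq_abs, Real.le_sqrt (by positivity) (sq_nonneg _)]
  nlinarith [Real.sq_sqrt h, sq_nonneg (x - y)]

theorem Real.abs_add_abs_of_mul_nonneg {x y : ℝ} (h : 0 ≤ x * y) : |x| + |y| = |x + y| :=
  ((abs_add_eq_add_abs_iff x y).2 ((mul_nonneg_iff.1 h).imp id fun h ↦ ⟨h.1, h.2⟩)).symm

theorem Complex.norm_add_norm_eq_max_of_add_of_mul_real {z w : ℂ} {S P : ℝ} (hS : z + w = S)
    (hP : z * w = P) (hP0 : 0 ≤ P) : ‖z‖ + ‖w‖ = max |S| (2 * √P) := by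
  by_cases hz : z.im = 0
  · have hw : w.im = 0 := by simpa [hz] using congrArg Complex.im hS
    obtain ⟨x, rfl⟩ : ∃ x : ℝ, (x : ℂ) = z := ⟨z.re, Complex.ext rfl hz.symm⟩
    obtain ⟨y, rfl⟩ : ∃ y : ℝ, (y : ℂ) = w := ⟨w.re, Complex.ext rfl hw.symm⟩
    have hxy : x + y = S := by exact_mod_cast hS
    have hxy' : x * y = P := by exact_mod_cast hP
    subst hxy hxy'
    rw [Complex.norm_real, Complex.norm_real, Real.norm_eq_abs, Real.norm_eq_abs,
      Real.abs_add_abs_of_mul_nonneg hP0, max_eq_left (Real.two_mul_sqrt_mul_le_abs_add hP0)]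
  · obtain rfl := Complex.eq_conj_of_add_of_mul_real hS hP hz
    have hnorm : √P = ‖z‖ := by
      rw [Complex.ofReal_inj.1 (hP.symm.trans (Complex.mul_conj z)), Complex.normSq_eq_norm_sq,
        Real.sqrt_sq (norm_nonneg z)]
    have hre : S = 2 * z.re := by
      simpa [two_mul] using (congrArg Complex.re hS).symm
    rw [Complex.norm_conj, hnorm, hre, abs_mul, abs_two, max_eq_right
      (mul_le_mul_of_nonneg_left (Complex.abs_re_le_norm z) zero_le_two)]
    ring

theorem linear_coeff_sq_lt (r s : ℤ) (hs : 3 ≤ s) (hr : s + 1 ≤ r) :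
    (r * s ^ 2 - s ^ 2 - 2 * r * s + r + 2) ^ 2 < (r - 1) * (s - 1) * (r * s - r - s) ^ 2 := by
  obtain ⟨u, hu, rfl⟩ : ∃ u, 0 ≤ u ∧ s = u + 3 := ⟨s - 3, by omega, by omega⟩
  obtain ⟨t, ht, rfl⟩ : ∃ t, 0 ≤ t ∧ r = t + u + 4 := ⟨r - u - 4, by omega, by omega⟩
  nlinarith [mul_nonneg ht hu, mul_nonneg (mul_nonneg ht ht) ht,
    mul_nonneg (mul_nonneg hu hu) hu, mul_nonneg ht ht, mul_nonneg hu hu,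
    mul_nonneg (mul_nonneg ht ht) hu, mul_nonneg (mul_nonneg ht hu) hu]

theorem four_mul_const_coeff_lt (r s : ℤ) (hs : 3 ≤ s) (hr : s + 1 ≤ r) :
    4 * ((s - 1) * (s - 2) * (r - 1)) < (r - 1) * (s - 1) * (r * s - r - s) := by
  obtain ⟨u, hu, rfl⟩ : ∃ u, 0 ≤ u ∧ s = u + 3 := ⟨s - 3, by omega, by omega⟩
  obtain ⟨t, ht, rfl⟩ : ∃ t, 0 ≤ t ∧ r = t + u + 4 := ⟨r - u - 4, by omega, by omega⟩
  nlinarith [mul_nonneg ht hu, mul_nonneg ht ht, mul_nonneg hu hu,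
    mul_nonneg (mul_nonneg ht ht) hu, mul_nonneg (mul_nonneg ht hu) hu]

theorem stmt_2 (r s : ℤ) (hs : 3 ≤ s) (hr : s + 1 ≤ r) (ζ1 ζ2 : ℂ)
    (hsum : ζ1 + ζ2 =
      -(((r * s ^ 2 - s ^ 2 - 2 * r * s + r + 2 : ℤ) : ℂ) / ((r * s - r - s : ℤ) : ℂ)))
    (hprod : ζ1 * ζ2 =
      (((s - 1) * (s - 2) * (r - 1) : ℤ) : ℂ) / ((r * s - r - s : ℤ) : ℂ)) :
    ‖ζ1‖ + ‖ζ2‖ < Real.sqrt (((r - 1) * (s - 1) : ℤ) : ℝ) := by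
  have hd : (0 : ℝ) < ((r * s - r - s : ℤ) : ℝ) := by
    exact_mod_cast (by nlinarith : (0 : ℤ) < r * s - r - s)
  have hP0 : (0 : ℝ) ≤ (((s - 1) * (s - 2) * (r - 1) : ℤ) : ℝ) / ((r * s - r - s : ℤ) : ℝ) :=
    div_nonneg (Int.cast_nonneg (mul_nonneg (mul_nonneg (by omega) (by omega)) (by omega))) hd.le
  rw [Complex.norm_add_norm_eq_max_of_add_of_mul_real
    (S := -(((r * s ^ 2 - s ^ 2 - 2 * r * s + r + 2 : ℤ) : ℝ) / ((r * s - r - s : ℤ) : ℝ)))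
    (by rw [hsum]; push_cast; rfl) (by rw [hprod]; push_cast; rfl) hP0]
  refine max_lt (Real.lt_sqrt_of_sq_lt ?_) (Real.lt_sqrt_of_sq_lt ?_)
  · rw [sq_abs, neg_sq, div_pow, div_lt_iff₀ (by positivity)]
    exact_mod_cast linear_coeff_sq_lt r s hs hr
  · rw [mul_pow, Real.sq_sqrt hP0, mul_div_assoc', div_lt_iff₀ hd]
    exact_mod_cast four_mul_const_coeff_lt r s hs hr
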